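/- Let G be a locally compact group and H ⊆ L²(G) a closed left-translation-invariant subspace consisting of continuous functions. Suppose there exists γ ∈ G such that the point evaluation f ↦ f(γ) is a continuous linear functional on H. Then there exists a unique function p ∈ H such that p = p ∗ p*, and the orthogonal projection of L²(G) onto H is given by f ↦ f ∗ p*. Moreover, every f ∈ H satisfies f(x) = ⟨f, L_x p⟩ for all x, and H consists of continuous functions vanishing at infinity. -/

import Mathlib

open MeasureTheory Filter
open scoped ENNReal Topology

/-- Left translation `L_x f (y) = f (x⁻¹ y)`. -/
def Ltrans {G : Type*} [Group G] (x : G) (f : G → ℂ) : G → ℂ := fun y => f (x⁻¹ * y)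

/-- The involution `f*(x) = conj (f (x⁻¹))`. -/
def invol {G : Type*} [Group G] (f : G → ℂ) : G → ℂ := fun x => (starRingEnd ℂ) (f x⁻¹)

/-- Convolution `(f ∗ g)(x) = ∫ f(y) g(y⁻¹ x) dy`. -/
noncomputable def conv {G : Type*} [Group G] [MeasurableSpace G]
    (μ : Measure G) (f g : G → ℂ) (x : G) : ℂ :=
  ∫ y, f y * g (y⁻¹ * x) ∂μ

/-
Evaluation at `γ` is bounded on `H`, hence so is evaluation at `1`, since `f 1 = (L_γ f) γ` and
`L_γ` is an `L²` isometry. As `H` is a closed subspace of `L²`, the Riesz representation theorem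
gives `p ∈ H` with `f 1 = ⟨f, p⟩` on `H`, and translating, `f x = (L_{x⁻¹} f) 1 = ⟨f, L_x p⟩`,
i.e. `f = f ∗ p*`. For an arbitrary `f ∈ L²` with orthogonal projection `g` onto `H`, the
functions `L_x p` lie in `H`, so `(f ∗ p*)(x) = ⟨f, L_x p⟩ = ⟨g, L_x p⟩ = g x`. Any `q` with the
same projection property reproduces `H` at `1` as well, so `q = p`. Finally `x ↦ ⟨f, L_x p⟩`
vanishes outside `supp φ · (supp ψ)⁻¹` when `f, p` are replaced by compactly supported `φ, ψ`, and
Cauchy–Schwarz controls the error of this replacement uniformly in `x`.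
-/

open scoped ComplexConjugate InnerProductSpace

namespace MeasureTheory

variable {X : Type*} [MeasurableSpace X] {μ : Measure X} {f g : X → ℂ}

theorem MemLp.inner_toLp_toLp (hf : MemLp f 2 μ) (hg : MemLp g 2 μ) :
    ⟪hf.toLp f, hg.toLp g⟫_ℂ = ∫ x, g x * conj (f x) ∂μ := by
  rw [L2.inner_def]
  refine integral_congr_ae ?_
  filter_upwards [hf.coeFn_toLp, hg.coeFn_toLp] with x hfx hgx
  rw [RCLike.inner_apply, hfx, hgx, mul_comm]

theorem MemLp.integrable_mul_conj (hf : MemLp f 2 μ) (hg : MemLp g 2 μ) :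
    Integrable (fun x => f x * conj (g x)) μ :=
  hf.integrable_mul hg.star

theorem MemLp.eq_zero_of_integral_mul_conj_self_eq_zero [TopologicalSpace X] [μ.IsOpenPosMeasure]
    (hf : MemLp f 2 μ) (hfc : Continuous f) (h : ∫ x, f x * conj (f x) ∂μ = 0) : f = 0 := by
  have hf0 : hf.toLp f = 0 := inner_self_eq_zero.1 ((hf.inner_toLp_toLp hf).trans h)
  have hf_ae := hf.coeFn_toLp
  rw [hf0] at hf_ae
  exact (hfc.ae_eq_iff_eq μ continuous_zero).1 (hf_ae.symm.trans (Lp.coeFn_zero ℂ 2 μ))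

end MeasureTheory

def IsReproducingKernelAt {X : Type*} [MeasurableSpace X] (μ : Measure X) (V : Set (X → ℂ))
    (k : X → ℂ) (x₀ : X) : Prop :=
  ∀ f ∈ V, f x₀ = ∫ x, f x * conj (k x) ∂μ

namespace Submodule

variable {X : Type*} [MeasurableSpace X] {μ : Measure X} (V : Submodule ℂ (X → ℂ))

theorem eq_of_isReproducingKernelAt [TopologicalSpace X] [μ.IsOpenPosMeasure]
    (hV : ∀ f ∈ V, MemLp f 2 μ) (hVc : ∀ f ∈ V, Continuous f) {x₀ : X} {k₁ k₂ : X → ℂ}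
    (hk₁ : k₁ ∈ V) (hk₂ : k₂ ∈ V)
    (h₁ : IsReproducingKernelAt μ V k₁ x₀) (h₂ : IsReproducingKernelAt μ V k₂ x₀) : k₁ = k₂ := by
  have hd : k₁ - k₂ ∈ V := V.sub_mem hk₁ hk₂
  have hd2 := hV _ hd
  refine sub_eq_zero.1 (hd2.eq_zero_of_integral_mul_conj_self_eq_zero (hVc _ hd) ?_)
  calc ∫ x, (k₁ - k₂) x * conj ((k₁ - k₂) x) ∂μ
      = ∫ x, (k₁ - k₂) x * conj (k₁ x) ∂μ - ∫ x, (k₁ - k₂) x * conj (k₂ x) ∂μ := by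
        rw [← integral_sub (hd2.integrable_mul_conj (hV _ hk₁))
          (hd2.integrable_mul_conj (hV _ hk₂))]
        simp only [Pi.sub_apply, map_sub, mul_sub]
    _ = 0 := by rw [← h₁ _ hd, ← h₂ _ hd, sub_self]

variable (hV : ∀ f ∈ V, MemLp f 2 μ)

noncomputable def toL2 : V →ₗ[ℂ] Lp ℂ 2 μ where
  toFun f := (hV f f.2).toLp f
  map_add' _ _ := MemLp.toLp_add _ _
  map_smul' c _ := MemLp.toLp_const_smul c _

theorem toL2_apply (f : V) : V.toL2 hV f = (hV f f.2).toLp f := rfl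

theorem toL2_injective [TopologicalSpace X] [μ.IsOpenPosMeasure] (hVc : ∀ f ∈ V, Continuous f) :
    Function.Injective (V.toL2 hV) := fun f g hfg =>
  Subtype.ext <| (Continuous.ae_eq_iff_eq μ (hVc f f.2) (hVc g g.2)).1 <|
    (MemLp.toLp_eq_toLp_iff (hV f f.2) (hV g g.2)).1 hfg

theorem isClosed_range_toL2 (hclosed : ∀ f : X → ℂ, MemLp f 2 μ →
      (∀ ε : ℝ, 0 < ε → ∃ g ∈ V, eLpNorm (f - g) 2 μ < ENNReal.ofReal ε) →
      ∃ g ∈ V, f =ᵐ[μ] g) :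
    IsClosed (LinearMap.range (V.toL2 hV) : Set (Lp ℂ 2 μ)) := by
  refine isClosed_of_closure_subset fun u hu => ?_
  have happrox : ∀ ε : ℝ, 0 < ε → ∃ g ∈ V, eLpNorm (⇑u - g) 2 μ < ENNReal.ofReal ε := by
    intro ε hε
    obtain ⟨_, ⟨g, rfl⟩, hug⟩ := EMetric.mem_closure_iff.1 hu _ (ENNReal.ofReal_pos.2 hε)
    refine ⟨g, g.2, ?_⟩
    rwa [toL2_apply, Lp.edist_def,
      eLpNorm_congr_ae (EventuallyEq.rfl.sub (hV g g.2).coeFn_toLp)] at hug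
  obtain ⟨g, hg, hug⟩ := hclosed u (Lp.memLp u) happrox
  exact ⟨⟨g, hg⟩, (MemLp.toLp_congr (hV g hg) (Lp.memLp u) hug.symm).trans (Lp.toLp_coeFn u _)⟩

theorem exists_integral_sub_mul_conj_eq_zero
    (hclosed : IsClosed (LinearMap.range (V.toL2 hV) : Set (Lp ℂ 2 μ))) {f : X → ℂ}
    (hf : MemLp f 2 μ) : ∃ g ∈ V, ∀ h ∈ V, ∫ x, (f x - g x) * conj (h x) ∂μ = 0 := by
  set E := LinearMap.range (V.toL2 hV)
  have : CompleteSpace E := hclosed.completeSpace_coe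
  obtain ⟨g, hg⟩ := E.starProjection_apply_mem (hf.toLp f)
  refine ⟨g, g.2, fun h hh => ?_⟩
  have horth := E.inner_right_of_mem_orthogonal (LinearMap.mem_range_self _ ⟨h, hh⟩)
    (E.sub_starProjection_mem_orthogonal (hf.toLp f))
  rwa [← hg, toL2_apply, toL2_apply, ← MemLp.toLp_sub, MemLp.inner_toLp_toLp] at horth

theorem exists_isReproducingKernelAt [TopologicalSpace X] [μ.IsOpenPosMeasure]
    (hVc : ∀ f ∈ V, Continuous f)
    (hclosed : IsClosed (LinearMap.range (V.toL2 hV) : Set (Lp ℂ 2 μ))) (x₀ : X) (C : ℝ)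
    (hC : ∀ f ∈ V, ‖f x₀‖ ≤ C * (eLpNorm f 2 μ).toReal) :
    ∃ k ∈ V, IsReproducingKernelAt μ V k x₀ := by
  set E := LinearMap.range (V.toL2 hV)
  have : CompleteSpace E := hclosed.completeSpace_coe
  let e : V ≃ₗ[ℂ] E := LinearEquiv.ofInjective _ (V.toL2_injective hV hVc)
  let ev : E →ₗ[ℂ] ℂ := ((LinearMap.proj x₀).comp V.subtype).comp e.symm.toLinearMap
  have he : ∀ f : V, (e f : Lp ℂ 2 μ) = (hV f f.2).toLp f := fun _ => rfl
  have hev : ∀ u, ‖ev u‖ ≤ C * ‖u‖ := fun u => by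
    obtain ⟨f, rfl⟩ := e.surjective u
    calc ‖ev (e f)‖ = ‖(f : X → ℂ) x₀‖ := by simp [ev]
      _ ≤ C * (eLpNorm (f : X → ℂ) 2 μ).toReal := hC f f.2
      _ = C * ‖e f‖ := by rw [E.coe_norm (e f), he, Lp.norm_toLp]
  set k := e.symm ((InnerProductSpace.toDual ℂ E).symm (ev.mkContinuous C hev))
  refine ⟨k, k.2, fun f hf => ?_⟩
  calc f x₀ = ev.mkContinuous C hev (e ⟨f, hf⟩) := by simp [ev]
    _ = ⟪(e k : Lp ℂ 2 μ), e ⟨f, hf⟩⟫_ℂ := by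
      rw [e.apply_symm_apply, ← InnerProductSpace.toDual_symm_apply, E.coe_inner]
    _ = ∫ x, f x * conj ((k : X → ℂ) x) ∂μ := by rw [he, he, MemLp.inner_toLp_toLp]

end Submodule

section Group

variable {G : Type*} [Group G] [MeasurableSpace G] {μ : Measure G}

theorem conv_invol_apply (f g : G → ℂ) (x : G) :
    conv μ f (invol g) x = ∫ y, f y * conj (Ltrans x g y) ∂μ := by
  simp only [conv, invol, Ltrans, mul_inv_rev, inv_inv]

theorem conv_invol_one (f g : G → ℂ) : conv μ f (invol g) 1 = ∫ y, f y * conj (g y) ∂μ := by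
  simp [conv_invol_apply, Ltrans]

open scoped Pointwise in
theorem conv_invol_eq_zero_of_notMem [TopologicalSpace G] {f g : G → ℂ} {x : G}
    (hx : x ∉ tsupport f * (tsupport g)⁻¹) : conv μ f (invol g) x = 0 := by
  rw [conv_invol_apply]
  refine integral_eq_zero_of_ae (Eventually.of_forall fun y => ?_)
  by_contra hy
  obtain ⟨hfy, hgy⟩ := mul_ne_zero_iff.1 hy
  refine hx ⟨y, subset_tsupport f hfy, (x⁻¹ * y)⁻¹, ?_, by group⟩
  exact Set.inv_mem_inv.2 (subset_tsupport g fun h => hgy (by simp [Ltrans, h]))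

variable [MeasurableMul G] [μ.IsMulLeftInvariant]

theorem eLpNorm_Ltrans {f : G → ℂ} (hf : AEStronglyMeasurable f μ) (x : G) :
    eLpNorm (Ltrans x f) 2 μ = eLpNorm f 2 μ :=
  eLpNorm_comp_measurePreserving hf (measurePreserving_mul_left μ x⁻¹)

theorem MeasureTheory.MemLp.Ltrans {f : G → ℂ} (hf : MemLp f 2 μ) (x : G) :
    MemLp (Ltrans x f) 2 μ :=
  ⟨hf.aestronglyMeasurable.comp_quasiMeasurePreserving
      (measurePreserving_mul_left μ x⁻¹).quasiMeasurePreserving,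
    (eLpNorm_Ltrans hf.aestronglyMeasurable x).symm ▸ hf.eLpNorm_lt_top⟩

theorem conv_Ltrans (x : G) (f g : G → ℂ) : conv μ (Ltrans x f) g = Ltrans x (conv μ f g) := by
  funext y
  rw [conv, Ltrans, conv, ← integral_mul_left_eq_self _ x]
  simp only [Ltrans, inv_mul_cancel_left, mul_inv_rev, mul_assoc]

theorem conv_invol_sub_left {f g k : G → ℂ} (hf : MemLp f 2 μ) (hg : MemLp g 2 μ)
    (hk : MemLp k 2 μ) : conv μ (f - g) (invol k) = conv μ f (invol k) - conv μ g (invol k) := by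
  funext x
  simp only [Pi.sub_apply, conv_invol_apply, sub_mul]
  exact integral_sub (hf.integrable_mul_conj (hk.Ltrans x)) (hg.integrable_mul_conj (hk.Ltrans x))

theorem conv_invol_sub_right {f g k : G → ℂ} (hf : MemLp f 2 μ) (hg : MemLp g 2 μ)
    (hk : MemLp k 2 μ) : conv μ f (invol (g - k)) = conv μ f (invol g) - conv μ f (invol k) := by
  funext x
  simp only [Pi.sub_apply, conv_invol_apply]
  rw [← integral_sub (hf.integrable_mul_conj (hg.Ltrans x)) (hf.integrable_mul_conj (hk.Ltrans x))]
  simp only [Ltrans, Pi.sub_apply, map_sub, mul_sub]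

theorem norm_conv_invol_le {f g : G → ℂ} (hf : MemLp f 2 μ) (hg : MemLp g 2 μ) (x : G) :
    ‖conv μ f (invol g) x‖ ≤ (eLpNorm f 2 μ).toReal * (eLpNorm g 2 μ).toReal := by
  rw [conv_invol_apply, ← MemLp.inner_toLp_toLp (hg.Ltrans x) hf, mul_comm, ← Lp.norm_toLp _ hf,
    ← eLpNorm_Ltrans hg.aestronglyMeasurable x, ← Lp.norm_toLp _ (hg.Ltrans x)]
  exact norm_inner_le_norm _ _

end Group

section Decay

variable {G : Type*} [Group G] [TopologicalSpace G] [IsTopologicalGroup G] [LocallyCompactSpace G]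
  [SecondCountableTopology G] [MeasurableSpace G] [BorelSpace G] {μ : Measure G} [μ.IsHaarMeasure]

open scoped Pointwise in
theorem tendsto_conv_invol_cocompact {f g : G → ℂ} (hf : MemLp f 2 μ) (hg : MemLp g 2 μ) :
    Tendsto (conv μ f (invol g)) (cocompact G) (𝓝 0) := by
  rw [NormedAddGroup.tendsto_nhds_zero]
  intro ε hε
  obtain ⟨δ₁, hδ₁, hδ₁ε⟩ := exists_pos_mul_lt (half_pos hε) (eLpNorm g 2 μ).toReal
  obtain ⟨φ, hφc, hfφ, -, hφ⟩ := hf.exists_hasCompactSupport_eLpNorm_sub_le ENNReal.ofNat_ne_top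
    (ENNReal.ofReal_pos.2 hδ₁).ne'
  obtain ⟨δ₂, hδ₂, hδ₂ε⟩ := exists_pos_mul_lt (half_pos hε) (eLpNorm φ 2 μ).toReal
  obtain ⟨ψ, hψc, hgψ, -, hψ⟩ := hg.exists_hasCompactSupport_eLpNorm_sub_le ENNReal.ofNat_ne_top
    (ENNReal.ofReal_pos.2 hδ₂).ne'
  have hK : (tsupport φ * (tsupport ψ)⁻¹)ᶜ ∈ cocompact G :=
    (hφc.isCompact.mul hψc.isCompact.inv).compl_mem_cocompact
  filter_upwards [hK] with x hx
  have hsplit : conv μ f (invol g) x = conv μ (f - φ) (invol g) x + conv μ φ (invol (g - ψ)) x := by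
    rw [conv_invol_sub_left hf hφ hg, conv_invol_sub_right hφ hg hψ, Pi.sub_apply, Pi.sub_apply,
      conv_invol_eq_zero_of_notMem hx]
    ring
  calc ‖conv μ f (invol g) x‖
      ≤ (eLpNorm (f - φ) 2 μ).toReal * (eLpNorm g 2 μ).toReal
        + (eLpNorm φ 2 μ).toReal * (eLpNorm (g - ψ) 2 μ).toReal := by
        rw [hsplit]
        exact (norm_add_le _ _).trans (add_le_add (norm_conv_invol_le (hf.sub hφ) hg x)
          (norm_conv_invol_le hφ (hg.sub hψ) x))
    _ ≤ δ₁ * (eLpNorm g 2 μ).toReal + (eLpNorm φ 2 μ).toReal * δ₂ := by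
        gcongr
        · exact ENNReal.toReal_le_of_le_ofReal hδ₁.le hfφ
        · exact ENNReal.toReal_le_of_le_ofReal hδ₂.le hgψ
    _ < ε := by linarith

end Decay

section Kernel

variable {G : Type*} [Group G] [MeasurableSpace G] [MeasurableMul G] {μ : Measure G}
  [μ.IsMulLeftInvariant] {V : Set (G → ℂ)} {k : G → ℂ}

theorem IsReproducingKernelAt.conv_invol_eq_self (hVinv : ∀ x, ∀ f ∈ V, Ltrans x f ∈ V)
    (hk : IsReproducingKernelAt μ V k 1) {f : G → ℂ} (hf : f ∈ V) : conv μ f (invol k) = f := by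
  funext x
  have hx := hk _ (hVinv x⁻¹ f hf)
  rw [← conv_invol_one, conv_Ltrans] at hx
  simpa [Ltrans] using hx.symm

theorem IsReproducingKernelAt.conv_invol_eq_of_integral_sub_mul_conj_eq_zero
    (hVinv : ∀ x, ∀ f ∈ V, Ltrans x f ∈ V) (hk : IsReproducingKernelAt μ V k 1) (hkV : k ∈ V)
    (hk2 : MemLp k 2 μ) {f g : G → ℂ} (hf : MemLp f 2 μ) (hg : MemLp g 2 μ) (hgV : g ∈ V)
    (horth : ∀ h ∈ V, ∫ x, (f x - g x) * conj (h x) ∂μ = 0) : conv μ f (invol k) = g := by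
  funext x
  have hfg : conv μ (f - g) (invol k) x = 0 := by
    rw [conv_invol_apply]
    exact horth _ (hVinv x k hkV)
  rwa [conv_invol_sub_left hf hg hk2, Pi.sub_apply, hk.conv_invol_eq_self hVinv hgV,
    sub_eq_zero] at hfg

end Kernel

/-- a closed left-invariant subspace `H ⊆ L²(G)` of continuous functions
with a continuous point evaluation has a unique reproducing kernel `p ∈ H` with
`p = p ∗ p*`, the orthogonal projection onto `H` being `f ↦ f ∗ p*`; moreover every
`f ∈ H` satisfies `f(x) = ⟨f, L_x p⟩` and vanishes at infinity. -/
theorem reproducing_kernel_of_continuous_evaluation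
    {G : Type*} [Group G] [TopologicalSpace G] [IsTopologicalGroup G]
    [LocallyCompactSpace G] [SecondCountableTopology G]
    [MeasurableSpace G] [BorelSpace G]
    (μ : Measure G) [μ.IsHaarMeasure]
    (H : Set (G → ℂ))
    -- H consists of continuous L² functions
    (hcont : ∀ f ∈ H, Continuous f) (hL2 : ∀ f ∈ H, MemLp f 2 μ)
    -- H is a linear subspace
    (hzero : (0 : G → ℂ) ∈ H)
    (hadd : ∀ f ∈ H, ∀ g ∈ H, f + g ∈ H)
    (hsmul : ∀ (c : ℂ), ∀ f ∈ H, c • f ∈ H)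
    -- H is left-invariant
    (hinv : ∀ (x : G), ∀ f ∈ H, Ltrans x f ∈ H)
    -- H is closed in L²(G): any L² limit of elements of H agrees a.e. with some member of H
    (hclosed : ∀ f : G → ℂ, MemLp f 2 μ →
      (∀ ε : ℝ, 0 < ε → ∃ g ∈ H, eLpNorm (f - g) 2 μ < ENNReal.ofReal ε) →
      ∃ g ∈ H, f =ᵐ[μ] g)
    -- some point evaluation is a continuous linear functional on H
    (hev : ∃ γ : G, ∃ C : ℝ, ∀ f ∈ H, ‖f γ‖ ≤ C * (eLpNorm f 2 μ).toReal) :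
    ∃ p : G → ℂ,
      (p ∈ H ∧ (∀ x, p x = conv μ p (invol p) x) ∧
        (∀ f : G → ℂ, MemLp f 2 μ → (conv μ f (invol p) ∈ H ∧
          ∀ h ∈ H, ∫ x, (f x - conv μ f (invol p) x) * (starRingEnd ℂ) (h x) ∂μ = 0))) ∧
      (∀ q : G → ℂ,
        (q ∈ H ∧ (∀ x, q x = conv μ q (invol q) x) ∧
          (∀ f : G → ℂ, MemLp f 2 μ → (conv μ f (invol q) ∈ H ∧
            ∀ h ∈ H, ∫ x, (f x - conv μ f (invol q) x) * (starRingEnd ℂ) (h x) ∂μ = 0)))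
        → q = p) ∧
      (∀ f ∈ H, ∀ x : G,
        f x = ∫ y, f y * (starRingEnd ℂ) (Ltrans x p y) ∂μ) ∧
      (∀ f ∈ H, Tendsto f (cocompact G) (𝓝 0)) := by
  obtain ⟨γ, C, hC⟩ := hev
  let V : Submodule ℂ (G → ℂ) :=
    { carrier := H, add_mem' := fun hf hg => hadd _ hf _ hg, zero_mem' := hzero,
      smul_mem' := hsmul }
  have hVclosed := V.isClosed_range_toL2 hL2 hclosed
  have hC₁ : ∀ f ∈ V, ‖f 1‖ ≤ C * (eLpNorm f 2 μ).toReal := fun f hf => by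
    simpa [Ltrans, eLpNorm_Ltrans (hL2 f hf).aestronglyMeasurable] using hC _ (hinv γ f hf)
  obtain ⟨p, hpH, hp⟩ := V.exists_isReproducingKernelAt hL2 hcont hVclosed 1 C hC₁
  have hrep : ∀ f ∈ H, conv μ f (invol p) = f := fun f hf => hp.conv_invol_eq_self hinv hf
  have hproj : ∀ f : G → ℂ, MemLp f 2 μ → conv μ f (invol p) ∈ H ∧
      ∀ h ∈ H, ∫ x, (f x - conv μ f (invol p) x) * conj (h x) ∂μ = 0 := fun f hf => by
    obtain ⟨g, hgH, horth⟩ := V.exists_integral_sub_mul_conj_eq_zero hL2 hVclosed hf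
    rw [hp.conv_invol_eq_of_integral_sub_mul_conj_eq_zero hinv hpH (hL2 p hpH) hf (hL2 g hgH) hgH
      horth]
    exact ⟨hgH, horth⟩
  refine ⟨p, ⟨hpH, fun x => congrFun (hrep p hpH).symm x, hproj⟩, ?_,
    fun f hf x => by rw [← conv_invol_apply, hrep f hf],
    fun f hf => hrep f hf ▸ tendsto_conv_invol_cocompact (hL2 f hf) (hL2 p hpH)⟩
  rintro q ⟨hqH, -, hqproj⟩
  refine V.eq_of_isReproducingKernelAt hL2 hcont hqH hpH (fun f hf => ?_) hp
  obtain ⟨hfqH, hforth⟩ := hqproj f (hL2 f hf)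
  have hd : f - conv μ f (invol q) ∈ V := V.sub_mem hf hfqH
  have hfq := (hL2 _ hd).eq_zero_of_integral_mul_conj_self_eq_zero (hcont _ hd) (hforth _ hd)
  exact (congrFun (sub_eq_zero.1 hfq) 1).trans (conv_invol_one f q)
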